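/- For 1 ≤ i ≤ j < n, the subgroup of B_n generated by σᵢ, σ_{i+1}, …, σⱼ is isomorphic to the braid group B_{j−i+2}. -/

import Mathlib

/-!
The map `σ_t ↦ σ_{t+i-1}` is a homomorphism from `B_{j-i+2}` onto the subgroup; the content is
its injectivity, which we prove by Garside's method. Garside's lemma (two equal positive words
starting with the letters `a` and `b` are right multiples of their least common right multiple)
follows by induction from the cube condition and gives cancellation in the positive monoid `B⁺`.
The fundamental braid `Δ` of `B_m` is a right multiple of every generator and conjugates `σ_t`
to `σ_{m-t}`, so every element of `B⁺` divides a power of `Δ` and `B_m` acts on the formal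
fractions `Δ⁻ᵏ p`. This action shows that `B⁺` embeds in `B_m` and that every braid has the form
`Δ⁻ᵏ P`. If such a braid of `B_{j-i+2}` lies in the kernel, the shifted words of `Δᵏ` and `P`
are equal in `B_n⁺`; the positive relations never move a letter out of the window
`σ_i, …, σ_j`, so shifting back shows `Δᵏ = P` already in `B_{j-i+2}⁺`.
-/

/-- The braid relations on `n` strands, as elements of the free group on the
standard generators `σ₁, …, σ_{n-1}` (indexed by `Fin (n-1)`). -/
def braidRels (n : ℕ) : Set (FreeGroup (Fin (n - 1))) :=
  {r | (∃ i j : Fin (n - 1), (i : ℕ) + 1 < (j : ℕ) ∧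
          r = FreeGroup.of i * FreeGroup.of j * (FreeGroup.of i)⁻¹ * (FreeGroup.of j)⁻¹) ∨
       (∃ i j : Fin (n - 1), (i : ℕ) + 1 = (j : ℕ) ∧
          r = FreeGroup.of i * FreeGroup.of j * FreeGroup.of i *
              (FreeGroup.of j * FreeGroup.of i * FreeGroup.of j)⁻¹)}

/-- The Artin braid group on `n` strands. -/
def BraidGroup (n : ℕ) := PresentedGroup (braidRels n)

instance (n : ℕ) : Group (BraidGroup n) := by unfold BraidGroup; infer_instance

/-- The standard Artin generator `σ_{i+1}` (0-indexed by `i : Fin (n-1)`). -/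
def σ {n : ℕ} (i : Fin (n - 1)) : BraidGroup n := PresentedGroup.of i

/-- The Garside half-twist `Δ = (σ₁)(σ₂σ₁)⋯(σ_{n-1}⋯σ₁)`. -/
def halfTwist (n : ℕ) : BraidGroup n :=
  ((List.finRange (n - 1)).map (fun k =>
    ((((List.finRange (n - 1)).filter (· ≤ k)).reverse).map σ).prod)).prod

namespace BraidWord

def Far (x y : ℕ) : Prop := x + 2 ≤ y ∨ y + 2 ≤ x

def Adj (x y : ℕ) : Prop := y = x + 1 ∨ x = y + 1

instance (x y : ℕ) : Decidable (Adj x y) := inferInstanceAs (Decidable (_ ∨ _))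

lemma Far.symm {x y : ℕ} (h : Far x y) : Far y x := Or.symm h

lemma Adj.symm {x y : ℕ} (h : Adj x y) : Adj y x := Or.symm h

lemma eq_or_adj_or_far (x y : ℕ) : x = y ∨ Adj x y ∨ Far x y := by
  unfold Adj Far; omega

lemma Far.not_adj {x y : ℕ} (h : Far x y) : ¬ Adj x y := by unfold Far Adj at *; omega

lemma Far.ne {x y : ℕ} (h : Far x y) : x ≠ y := by unfold Far at h; omega

lemma Adj.ne {x y : ℕ} (h : Adj x y) : x ≠ y := by unfold Adj at h; omega

/-- The defining relations of the positive braid monoid, the letter `t` standing for `σ_{t+1}`. -/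
inductive Move : List ℕ → List ℕ → Prop
  | comm {x y : ℕ} : x + 2 ≤ y → Move [x, y] [y, x]
  | braid (x : ℕ) : Move [x, x + 1, x] [x + 1, x, x + 1]

inductive Cong : List ℕ → List ℕ → Prop
  | of {u v : List ℕ} : Move u v → Cong u v
  | refl (u : List ℕ) : Cong u u
  | symm {u v : List ℕ} : Cong u v → Cong v u
  | trans {u v w : List ℕ} : Cong u v → Cong v w → Cong u w
  | append {u v u' v' : List ℕ} : Cong u u' → Cong v v' → Cong (u ++ v) (u' ++ v')

infix:50 " ≋ " => Cong

instance : Trans Cong Cong Cong := ⟨Cong.trans⟩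

namespace Cong

variable {u v : List ℕ}

lemma of_eq (h : u = v) : u ≋ v := h ▸ refl u

lemma cons (a : ℕ) (h : u ≋ v) : a :: u ≋ a :: v := append (refl [a]) h

lemma append_left (p : List ℕ) (h : u ≋ v) : p ++ u ≋ p ++ v := append (refl p) h

lemma append_right (p : List ℕ) (h : u ≋ v) : u ++ p ≋ v ++ p := append h (refl p)

lemma swap {x y : ℕ} (h : Far x y) (p q : List ℕ) : p ++ x :: y :: q ≋ p ++ y :: x :: q := by
  refine append_left p (append_right q (?_ : [x, y] ≋ [y, x]))
  rcases h with h | h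
  · exact of (.comm h)
  · exact symm (of (.comm h))

lemma braid {x y : ℕ} (h : Adj x y) (p q : List ℕ) :
    p ++ x :: y :: x :: q ≋ p ++ y :: x :: y :: q := by
  refine append_left p (append_right q (?_ : [x, y, x] ≋ [y, x, y]))
  rcases h with rfl | rfl
  · exact of (.braid x)
  · exact symm (of (.braid y))

lemma length_eq (h : u ≋ v) : u.length = v.length := by
  induction h with
  | of h => cases h <;> rfl
  | refl => rfl
  | symm _ ih => exact ih.symm
  | trans _ _ ih₁ ih₂ => exact ih₁.trans ih₂
  | append _ _ ih₁ ih₂ => simp [ih₁, ih₂]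

lemma mem_iff (h : u ≋ v) {x : ℕ} : x ∈ u ↔ x ∈ v := by
  induction h with
  | of h => cases h <;> simp [or_comm, or_left_comm]
  | refl => rfl
  | symm _ ih => exact ih.symm
  | trans _ _ ih₁ ih₂ => exact ih₁.trans ih₂
  | append _ _ ih₁ ih₂ => simp [ih₁, ih₂]

lemma reverse (h : u ≋ v) : u.reverse ≋ v.reverse := by
  induction h with
  | of h =>
    cases h with
    | comm h => exact symm (of (.comm h))
    | braid x => exact of (.braid x)
  | refl => exact refl _
  | symm _ ih => exact symm ih
  | trans _ _ ih₁ ih₂ => exact trans ih₁ ih₂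
  | append _ _ ih₁ ih₂ => simpa using append ih₂ ih₁

lemma map {A : Set ℕ} {f : ℕ → ℕ} (hfar : ∀ x ∈ A, ∀ y ∈ A, x + 2 ≤ y → Far (f x) (f y))
    (hadj : ∀ x ∈ A, x + 1 ∈ A → Adj (f x) (f (x + 1))) (h : u ≋ v) (hu : ∀ x ∈ u, x ∈ A) :
    u.map f ≋ v.map f := by
  induction h with
  | of h =>
    cases h with
    | comm h => exact swap (hfar _ (hu _ (by simp)) _ (hu _ (by simp)) h) [] []
    | braid x => exact braid (hadj _ (hu _ (by simp)) (hu _ (by simp))) [] []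
  | refl => exact refl _
  | symm h ih => exact symm (ih fun x hx => hu x (h.mem_iff.mp hx))
  | trans h₁ _ ih₁ ih₂ => exact trans (ih₁ hu) (ih₂ fun x hx => hu x (h₁.mem_iff.mpr hx))
  | append _ _ ih₁ ih₂ =>
    simpa using append (ih₁ fun x hx => hu x (by simp [hx])) (ih₂ fun x hx => hu x (by simp [hx]))

lemma prod_map_eq {M : Type*} [Monoid M] {A : Set ℕ} {f : ℕ → M}
    (hcomm : ∀ x ∈ A, ∀ y ∈ A, x + 2 ≤ y → f x * f y = f y * f x)
    (hbraid : ∀ x ∈ A, x + 1 ∈ A → f x * f (x + 1) * f x = f (x + 1) * f x * f (x + 1))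
    (h : u ≋ v) (hu : ∀ x ∈ u, x ∈ A) : (u.map f).prod = (v.map f).prod := by
  induction h with
  | of h =>
    cases h with
    | comm h => simpa using hcomm _ (hu _ (by simp)) _ (hu _ (by simp)) h
    | braid x => simpa [mul_assoc] using hbraid _ (hu _ (by simp)) (hu _ (by simp))
  | refl => rfl
  | symm h ih => exact (ih fun x hx => hu x (h.mem_iff.mp hx)).symm
  | trans h₁ _ ih₁ ih₂ => exact (ih₁ hu).trans (ih₂ fun x hx => hu x (h₁.mem_iff.mpr hx))
  | append _ _ ih₁ ih₂ =>
    simp only [List.map_append, List.prod_append]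
    rw [ih₁ fun x hx => hu x (by simp [hx]), ih₂ fun x hx => hu x (by simp [hx])]

end Cong

def Bounded (N : ℕ) (w : List ℕ) : Prop := ∀ x ∈ w, x < N

lemma Cong.bounded_iff {N : ℕ} {u v : List ℕ} (h : u ≋ v) : Bounded N u ↔ Bounded N v :=
  forall_congr' fun _ => imp_congr_left h.mem_iff

lemma Bounded.append {N : ℕ} {u v : List ℕ} (hu : Bounded N u) (hv : Bounded N v) :
    Bounded N (u ++ v) := by
  simpa [Bounded, or_imp, forall_and] using And.intro hu hv

/-- `a :: complement a b ≋ b :: complement b a` is the least common right multiple of the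
letters `a` and `b`. -/
def complement (a b : ℕ) : List ℕ :=
  if a = b then [] else if Adj a b then [b, a] else [b]

@[simp] lemma complement_self (a : ℕ) : complement a a = [] := by simp [complement]

lemma complement_of_adj {a b : ℕ} (h : Adj a b) : complement a b = [b, a] := by
  simp [complement, h.ne, h]

lemma complement_of_far {a b : ℕ} (h : Far a b) : complement a b = [b] := by
  simp [complement, h.ne, h.not_adj]

/-- For words of length at most `L + 1`: a positive braid that is a right multiple of the
letters `a` and `b` is a right multiple of their least common right multiple. -/
def LcmProperty (L : ℕ) : Prop :=
  ∀ ⦃a b : ℕ⦄ ⦃u v : List ℕ⦄, a :: u ≋ b :: v → u.length < L →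
    ∃ w, u ≋ complement a b ++ w ∧ v ≋ complement b a ++ w

namespace LcmProperty

variable {L : ℕ}

lemma cancel_cons (hL : LcmProperty L) {x : ℕ} {u v : List ℕ} (h : x :: u ≋ x :: v)
    (hu : u.length < L) : u ≋ v := by
  obtain ⟨w, h₁, h₂⟩ := hL h hu
  simp only [complement_self, List.nil_append] at h₁ h₂
  exact h₁.trans h₂.symm

lemma cancel_left (hL : LcmProperty L) {p u v : List ℕ} (h : p ++ u ≋ p ++ v)
    (hl : (p ++ u).length ≤ L) : u ≋ v := by
  induction p with
  | nil => exact h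
  | cons x p ih =>
    exact ih (hL.cancel_cons h (by simpa using hl)) (by simp at hl ⊢; omega)

variable {e a b : ℕ} {w₁ w₂ : List ℕ}

lemma cube_far_far (hL : LcmProperty L) (hea : Far e a) (heb : Far e b) (hab : a ≠ b)
    (H : complement e a ++ w₁ ≋ complement e b ++ w₂) (hl : (complement e a ++ w₁).length ≤ L) :
    ∃ w, complement a e ++ w₁ ≋ complement a b ++ w ∧
      complement b e ++ w₂ ≋ complement b a ++ w := by
  rw [complement_of_far hea, complement_of_far heb] at H
  rw [complement_of_far hea] at hl
  rw [complement_of_far hea.symm, complement_of_far heb.symm]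
  obtain ⟨s, hs₁, hs₂⟩ := hL (show a :: w₁ ≋ b :: w₂ from H) (by simp at hl; omega)
  rcases (eq_or_adj_or_far a b).resolve_left hab with hadj | hfar
  · rw [complement_of_adj hadj] at hs₁ ⊢
    rw [complement_of_adj hadj.symm] at hs₂ ⊢
    refine ⟨e :: s, ?_, ?_⟩
    · calc e :: w₁ ≋ e :: b :: a :: s := hs₁.cons e
        _ ≋ b :: e :: a :: s := Cong.swap heb [] (a :: s)
        _ ≋ b :: a :: e :: s := Cong.swap hea [b] s
    · calc e :: w₂ ≋ e :: a :: b :: s := hs₂.cons e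
        _ ≋ a :: e :: b :: s := Cong.swap hea [] (b :: s)
        _ ≋ a :: b :: e :: s := Cong.swap heb [a] s
  · rw [complement_of_far hfar] at hs₁ ⊢
    rw [complement_of_far hfar.symm] at hs₂ ⊢
    refine ⟨e :: s, ?_, ?_⟩
    · exact (hs₁.cons e).trans (Cong.swap heb [] s)
    · exact (hs₂.cons e).trans (Cong.swap hea [] s)

lemma cube_adj_far (hL : LcmProperty L) (hea : Adj e a) (heb : Far e b) (hab : a ≠ b)
    (H : complement e a ++ w₁ ≋ complement e b ++ w₂) (hl : (complement e a ++ w₁).length ≤ L) :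
    ∃ w, complement a e ++ w₁ ≋ complement a b ++ w ∧
      complement b e ++ w₂ ≋ complement b a ++ w := by
  rw [complement_of_adj hea, complement_of_far heb] at H
  rw [complement_of_adj hea] at hl
  rw [complement_of_adj hea.symm, complement_of_far heb.symm]
  simp only [List.length_append, List.length_cons, List.length_nil] at hl
  obtain ⟨s, hs₁, hs₂⟩ := hL (show a :: e :: w₁ ≋ b :: w₂ from H) (by simp; omega)
  rcases (eq_or_adj_or_far a b).resolve_left hab with hadj | hfar
  · rw [complement_of_adj hadj] at hs₁ ⊢
    rw [complement_of_adj hadj.symm] at hs₂ ⊢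
    have hls : s.length + 1 = w₁.length := by have := hs₁.length_eq; simp at this; omega
    obtain ⟨r₁, hr₁, hr₂⟩ := hL (show e :: w₁ ≋ b :: a :: s from hs₁) (by omega)
    rw [complement_of_far heb] at hr₁
    rw [complement_of_far heb.symm] at hr₂
    obtain ⟨r₂, ht₁, ht₂⟩ := hL (show a :: s ≋ e :: r₁ from hr₂) (by omega)
    rw [complement_of_adj hea.symm] at ht₁
    rw [complement_of_adj hea] at ht₂
    refine ⟨e :: a :: b :: r₂, ?_, ?_⟩
    · have hw₁ : w₁ ≋ b :: a :: e :: r₂ := hr₁.trans (ht₂.cons b)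
      calc e :: a :: w₁ ≋ e :: a :: b :: a :: e :: r₂ := Cong.append_left [e, a] hw₁
        _ ≋ e :: b :: a :: b :: e :: r₂ := Cong.braid hadj [e] (e :: r₂)
        _ ≋ b :: e :: a :: b :: e :: r₂ := Cong.swap heb [] (a :: b :: e :: r₂)
        _ ≋ b :: e :: a :: e :: b :: r₂ := Cong.swap heb.symm [b, e, a] r₂
        _ ≋ b :: a :: e :: a :: b :: r₂ := Cong.braid hea [b] (b :: r₂)
    · have hw₂ : w₂ ≋ a :: b :: e :: a :: r₂ := hs₂.trans (Cong.append_left [a, b] ht₁)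
      calc e :: w₂ ≋ e :: a :: b :: e :: a :: r₂ := hw₂.cons e
        _ ≋ e :: a :: e :: b :: a :: r₂ := Cong.swap heb.symm [e, a] (a :: r₂)
        _ ≋ a :: e :: a :: b :: a :: r₂ := Cong.braid hea [] (b :: a :: r₂)
        _ ≋ a :: e :: b :: a :: b :: r₂ := Cong.braid hadj [a, e] r₂
        _ ≋ a :: b :: e :: a :: b :: r₂ := Cong.swap heb [a] (a :: b :: r₂)
  · rw [complement_of_far hfar] at hs₁ ⊢
    rw [complement_of_far hfar.symm] at hs₂ ⊢
    obtain ⟨r, hr₁, hr₂⟩ := hL (show e :: w₁ ≋ b :: s from hs₁) (by omega)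
    rw [complement_of_far heb] at hr₁
    rw [complement_of_far heb.symm] at hr₂
    refine ⟨e :: a :: r, ?_, ?_⟩
    · calc e :: a :: w₁ ≋ e :: a :: b :: r := Cong.append_left [e, a] hr₁
        _ ≋ e :: b :: a :: r := Cong.swap hfar [e] r
        _ ≋ b :: e :: a :: r := Cong.swap heb [] (a :: r)
    · calc e :: w₂ ≋ e :: a :: e :: r := (hs₂.trans (hr₂.cons a)).cons e
        _ ≋ a :: e :: a :: r := Cong.braid hea [] r

lemma cube_adj_adj (hL : LcmProperty L) (hea : Adj e a) (heb : Adj e b) (hab : a ≠ b)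
    (H : complement e a ++ w₁ ≋ complement e b ++ w₂) (hl : (complement e a ++ w₁).length ≤ L) :
    ∃ w, complement a e ++ w₁ ≋ complement a b ++ w ∧
      complement b e ++ w₂ ≋ complement b a ++ w := by
  have hfar : Far a b := by unfold Adj at hea heb; unfold Far; omega
  rw [complement_of_adj hea, complement_of_adj heb] at H
  rw [complement_of_adj hea] at hl
  rw [complement_of_adj hea.symm, complement_of_adj heb.symm, complement_of_far hfar,
    complement_of_far hfar.symm]
  simp only [List.length_append, List.length_cons, List.length_nil] at hl
  obtain ⟨s, hs₁, hs₂⟩ := hL (show a :: e :: w₁ ≋ b :: e :: w₂ from H) (by simp; omega)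
  rw [complement_of_far hfar] at hs₁
  rw [complement_of_far hfar.symm] at hs₂
  have hls : s.length = w₁.length := by have := hs₁.length_eq; simp at this; omega
  obtain ⟨r, hr₁, hr₂⟩ := hL (show e :: w₁ ≋ b :: s from hs₁) (by omega)
  rw [complement_of_adj heb] at hr₁
  rw [complement_of_adj heb.symm] at hr₂
  have hl₂ : w₂.length = w₁.length := by have := H.length_eq; simp at this; omega
  obtain ⟨t, ht₁, ht₂⟩ := hL (show e :: w₂ ≋ a :: s from hs₂) (by omega)
  rw [complement_of_adj hea] at ht₁
  rw [complement_of_adj hea.symm] at ht₂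
  have hlr : r.length + 2 = s.length := by have := hr₂.length_eq; simp at this; omega
  have hba : b :: r ≋ a :: t :=
    hL.cancel_cons (show e :: b :: r ≋ e :: a :: t from hr₂.symm.trans ht₂) (by simp; omega)
  obtain ⟨m, hm₁, hm₂⟩ := hL hba (by omega)
  rw [complement_of_far hfar.symm] at hm₁
  rw [complement_of_far hfar] at hm₂
  refine ⟨e :: b :: a :: e :: m, ?_, ?_⟩
  · have hw₁ : w₁ ≋ b :: e :: a :: m := hr₁.trans (Cong.append_left [b, e] hm₁)
    calc e :: a :: w₁ ≋ e :: a :: b :: e :: a :: m := Cong.append_left [e, a] hw₁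
      _ ≋ e :: b :: a :: e :: a :: m := Cong.swap hfar [e] (e :: a :: m)
      _ ≋ e :: b :: e :: a :: e :: m := Cong.braid hea.symm [e, b] m
      _ ≋ b :: e :: b :: a :: e :: m := Cong.braid heb [] (a :: e :: m)
  · have hw₂ : w₂ ≋ a :: e :: b :: m := ht₁.trans (Cong.append_left [a, e] hm₂)
    calc e :: b :: w₂ ≋ e :: b :: a :: e :: b :: m := Cong.append_left [e, b] hw₂
      _ ≋ e :: a :: b :: e :: b :: m := Cong.swap hfar.symm [e] (e :: b :: m)
      _ ≋ e :: a :: e :: b :: e :: m := Cong.braid heb.symm [e, a] m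
      _ ≋ a :: e :: a :: b :: e :: m := Cong.braid hea [] (b :: e :: m)
      _ ≋ a :: e :: b :: a :: e :: m := Cong.swap hfar [a, e] (e :: m)

lemma cube (hL : LcmProperty L)
    (H : complement e a ++ w₁ ≋ complement e b ++ w₂) (hl : (complement e a ++ w₁).length ≤ L) :
    ∃ w, complement a e ++ w₁ ≋ complement a b ++ w ∧
      complement b e ++ w₂ ≋ complement b a ++ w := by
  by_cases hab : a = b
  · subst hab
    exact ⟨complement a e ++ w₁, .of_eq (by simp),
      by simpa using Cong.append_left _ (hL.cancel_left H hl).symm⟩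
  have hl' : (complement e b ++ w₂).length ≤ L := H.length_eq ▸ hl
  rcases eq_or_adj_or_far e a with rfl | hea | hea
  · simp only [complement_self, List.nil_append] at H ⊢
    exact ⟨w₂, H, .refl _⟩
  all_goals rcases eq_or_adj_or_far e b with rfl | heb | heb
  all_goals try
    simp only [complement_self, List.nil_append] at H ⊢
    exact ⟨w₁, .refl _, H.symm⟩
  · exact hL.cube_adj_adj hea heb hab H hl
  · exact hL.cube_adj_far hea heb hab H hl
  · obtain ⟨w, h₁, h₂⟩ := hL.cube_adj_far heb hea (Ne.symm hab) H.symm hl'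
    exact ⟨w, h₂, h₁⟩
  · exact hL.cube_far_far hea heb hab H hl

end LcmProperty

/-- Garside's lemma, by induction on the length and then on the derivation of `a :: u ≋ b :: v`;
in a transitivity step `a :: u ≋ e :: z ≋ b :: v` the two factorizations through `e` are
reconciled by the cube condition. -/
theorem lcmProperty (L : ℕ) : LcmProperty L := by
  induction L using Nat.strong_induction_on with
  | _ L IH =>
  suffices ∀ x y, x ≋ y → ∀ a u b v, x = a :: u → y = b :: v → u.length < L →
      ∃ w, u ≋ complement a b ++ w ∧ v ≋ complement b a ++ w from
    fun a b u v h hl => this _ _ h a u b v rfl rfl hl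
  intro x y h
  induction h with
  | of h =>
    rintro a u b v rfl rfl -
    refine ⟨[], ?_, ?_⟩ <;> cases h
    all_goals first
      | (rw [complement_of_far (by unfold Far; omega)]; exact .refl _)
      | (rw [complement_of_adj (by unfold Adj; omega)]; exact .refl _)
  | refl x =>
    rintro a u b v rfl h -
    cases h
    exact ⟨u, .of_eq (by simp), .of_eq (by simp)⟩
  | symm h ih =>
    intro a u b v hx hy hl
    have hv : v.length = u.length := by have := h.length_eq; subst hx hy; simp at this; omega
    obtain ⟨w, h₁, h₂⟩ := ih b v a u hy hx (by omega)
    exact ⟨w, h₂, h₁⟩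
  | trans h₁ h₂ ih₁ ih₂ =>
    rename_i z _
    rintro a u b v rfl rfl hl
    obtain _ | ⟨e, z⟩ := z
    · exact absurd h₁.length_eq (by simp)
    have hz : z.length < L := by have := h₁.length_eq; simp at this; omega
    obtain ⟨w₁, hu, hz₁⟩ := ih₁ a u e z rfl rfl hl
    obtain ⟨w₂, hz₂, hv⟩ := ih₂ e z b v rfl rfl hz
    have hl' : (complement e a ++ w₁).length ≤ L - 1 := by rw [← hz₁.length_eq]; omega
    obtain ⟨w, hA, hB⟩ := (IH (L - 1) (by omega)).cube (hz₁.symm.trans hz₂) hl'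
    exact ⟨w, hu.trans hA, hv.trans hB⟩
  | append h₁ h₂ ih₁ ih₂ =>
    rename_i p q p' q'
    intro a u b v hx hy hl
    obtain _ | ⟨a₀, p⟩ := p
    · obtain rfl : p' = [] := List.eq_nil_of_length_eq_zero (by simpa using h₁.length_eq.symm)
      exact ih₂ a u b v hx hy hl
    obtain _ | ⟨b₀, p'⟩ := p'
    · exact absurd h₁.length_eq (by simp)
    simp only [List.cons_append, List.cons.injEq] at hx hy
    obtain ⟨rfl, rfl⟩ := hx
    obtain ⟨rfl, rfl⟩ := hy
    obtain ⟨w, hA, hB⟩ := ih₁ a₀ p b₀ p' rfl rfl (by simp at hl; omega)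
    exact ⟨w ++ q', by simpa using hA.append h₂, by simpa using hB.append (.refl q')⟩

namespace Cong

variable {p u v : List ℕ}

lemma cancel_left (h : p ++ u ≋ p ++ v) : u ≋ v :=
  (lcmProperty _).cancel_left h le_rfl

lemma cancel_right (h : u ++ p ≋ v ++ p) : u ≋ v := by
  simpa using (cancel_left (by simpa using h.reverse) : u.reverse ≋ v.reverse).reverse

end Cong

lemma cons_cong_append_of_far {x : ℕ} {P : List ℕ} (h : ∀ y ∈ P, Far x y) : x :: P ≋ P ++ [x] := by
  induction P with
  | nil => exact .refl _
  | cons y P ih =>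
    calc x :: y :: P ≋ y :: x :: P := Cong.swap (h y (by simp)) [] P
      _ ≋ y :: (P ++ [x]) := (ih fun z hz => h z (by simp [hz])).cons y

def descending (k : ℕ) : List ℕ := (List.range (k + 1)).reverse

lemma descending_succ (k : ℕ) : descending (k + 1) = (k + 1) :: descending k := by
  simp [descending, List.range_succ]

@[simp] lemma mem_descending {k x : ℕ} : x ∈ descending k ↔ x ≤ k := by
  simp [descending]

/-- The fundamental braid `Δ` on `K + 1` strands, `(σ₁)(σ₂σ₁)⋯(σ_K⋯σ₁)`. -/
def delta : ℕ → List ℕ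
  | 0 => []
  | k + 1 => delta k ++ descending k

lemma bounded_delta (K : ℕ) : Bounded K (delta K) := by
  induction K with
  | zero => simp [Bounded, delta]
  | succ K ih =>
    intro x hx
    rcases List.mem_append.mp hx with hx | hx
    · exact (ih x hx).trans K.lt_succ_self
    · exact Nat.lt_succ_of_le (mem_descending.mp hx)

lemma cons_descending {K t : ℕ} (ht : t + 1 ≤ K) :
    t :: descending K ≋ descending K ++ [t + 1] := by
  induction K with
  | zero => omega
  | succ K ih =>
    rw [descending_succ]
    obtain rfl | ht' := eq_or_lt_of_le (Nat.le_of_succ_le_succ ht)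
    · obtain _ | K := t
      · exact Cong.braid (Or.inl rfl) [] []
      · rw [descending_succ]
        calc (K + 1) :: (K + 2) :: (K + 1) :: descending K
            ≋ (K + 2) :: (K + 1) :: (K + 2) :: descending K := Cong.braid (Or.inl rfl) [] _
          _ ≋ (K + 2) :: (K + 1) :: (descending K ++ [K + 2]) :=
            Cong.append_left [K + 2, K + 1] (cons_cong_append_of_far fun y hy =>
              Or.inr (by have := mem_descending.mp hy; omega))
    · calc t :: (K + 1) :: descending K ≋ (K + 1) :: t :: descending K :=
          Cong.swap (Or.inl (by omega)) [] _
        _ ≋ (K + 1) :: (descending K ++ [t + 1]) := (ih ht').cons _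

lemma append_descending {K : ℕ} {P : List ℕ} (hP : ∀ x ∈ P, x + 1 ≤ K) :
    P ++ descending K ≋ descending K ++ P.map (· + 1) := by
  induction P with
  | nil => simpa using .refl _
  | cons x P ih =>
    calc x :: (P ++ descending K) ≋ x :: (descending K ++ P.map (· + 1)) :=
        (ih fun z hz => hP z (by simp [hz])).cons x
      _ ≋ (descending K ++ [x + 1]) ++ P.map (· + 1) :=
        Cong.append_right _ (cons_descending (hP x (by simp)))
      _ ≋ descending K ++ (x :: P).map (· + 1) := .of_eq (by simp)

lemma reverse_descending_append_delta (K : ℕ) :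
    (descending K).reverse ++ delta K ≋ delta K ++ descending K := by
  induction K with
  | zero => exact .refl _
  | succ K ih =>
    have hfar : (K + 1) :: delta K ≋ delta K ++ [K + 1] :=
      cons_cong_append_of_far fun y hy => Or.inr (by have := bounded_delta K y hy; omega)
    calc (descending (K + 1)).reverse ++ delta (K + 1)
        ≋ (descending K).reverse ++ ((K + 1) :: delta K) ++ descending K :=
          .of_eq (by simp [descending_succ, delta])
      _ ≋ (descending K).reverse ++ (delta K ++ [K + 1]) ++ descending K :=
          Cong.append_right _ (Cong.append_left _ hfar)
      _ ≋ ((descending K).reverse ++ delta K) ++ ((K + 1) :: descending K) := .of_eq (by simp)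
      _ ≋ (delta K ++ descending K) ++ ((K + 1) :: descending K) := Cong.append_right _ ih
      _ ≋ delta (K + 1) ++ descending (K + 1) := .of_eq (by simp [descending_succ, delta])

lemma reverse_delta (K : ℕ) : (delta K).reverse ≋ delta K := by
  induction K with
  | zero => exact .refl _
  | succ K ih =>
    calc (delta (K + 1)).reverse = (descending K).reverse ++ (delta K).reverse := by simp [delta]
      _ ≋ (descending K).reverse ++ delta K := Cong.append_left _ ih
      _ ≋ delta (K + 1) := reverse_descending_append_delta K

lemma cons_delta {K s : ℕ} (hs : s < K) : s :: delta K ≋ delta K ++ [K - 1 - s] := by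
  induction K generalizing s with
  | zero => omega
  | succ K ih =>
    have below : ∀ s < K, s :: delta (K + 1) ≋ delta (K + 1) ++ [K - s] := by
      intro s hs
      calc s :: delta (K + 1) = (s :: delta K) ++ descending K := rfl
        _ ≋ (delta K ++ [K - 1 - s]) ++ descending K := Cong.append_right _ (ih hs)
        _ ≋ delta K ++ (descending K ++ [K - 1 - s + 1]) :=
          by simpa using Cong.append_left _ (cons_descending (K := K) (t := K - 1 - s) (by omega))
        _ ≋ delta (K + 1) ++ [K - s] := .of_eq (by simp [delta]; omega)
    obtain hs | hs := Nat.lt_succ_iff_lt_or_eq.mp hs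
    · simpa [show K + 1 - 1 - s = K - s by omega] using below s hs
    subst s
    obtain _ | K := K
    · exact .refl _
    -- Reversing the case `s = 0` handles the top letter, as `Δ` is a palindrome.
    have h₀ := (below 0 K.succ_pos).reverse
    simp only [List.reverse_cons, List.reverse_append, List.reverse_nil, List.nil_append,
      Nat.sub_zero] at h₀
    calc (K + 1) :: delta (K + 2) ≋ (K + 1) :: (delta (K + 2)).reverse :=
          (reverse_delta _).symm.cons _
      _ ≋ (delta (K + 2)).reverse ++ [0] := h₀.symm
      _ ≋ delta (K + 2) ++ [K + 1 + 1 - 1 - (K + 1)] := by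
        simpa using Cong.append_right [0] (reverse_delta (K + 2))

lemma exists_delta_cong_cons {K s : ℕ} (hs : s < K) : ∃ C, delta K ≋ s :: C := by
  induction K with
  | zero => omega
  | succ K ih =>
    obtain hs | hs := Nat.lt_succ_iff_lt_or_eq.mp hs
    · obtain ⟨C, hC⟩ := ih hs
      exact ⟨C ++ descending K, Cong.append_right _ hC⟩
    subst s
    obtain _ | K := K
    · exact ⟨[], .refl _⟩
    refine ⟨descending K ++ (delta (K + 1)).map (· + 1), ?_⟩
    simpa [delta, descending_succ] using
      append_descending (K := K + 1) fun x hx => bounded_delta _ x hx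

lemma exists_delta_cong_append {K s : ℕ} (hs : s < K) : ∃ D, delta K ≋ D ++ [s] := by
  obtain ⟨C, hC⟩ := exists_delta_cong_cons hs
  exact ⟨C.reverse, by simpa using (reverse_delta K).symm.trans hC.reverse⟩

/-- Conjugation by `Δ ^ a` acts on the letters `t < K` as `t ↦ mirror K a t`. -/
def mirror (K a t : ℕ) : ℕ := if Even a then t else K - 1 - t

section Mirror

variable {K a b t : ℕ}

@[simp] lemma mirror_zero : mirror K 0 = id := by ext; simp [mirror]

lemma mirror_one : mirror K 1 t = K - 1 - t := by simp [mirror]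

lemma mirror_lt (ht : t < K) : mirror K a t < K := by
  unfold mirror; split <;> omega

lemma mirror_mirror (ht : t < K) : mirror K a (mirror K b t) = mirror K (a + b) t := by
  by_cases ha : Even a <;> by_cases hb : Even b <;> simp [mirror, ha, hb, Nat.even_add]; omega

lemma mirror_mirror_self (ht : t < K) : mirror K a (mirror K a t) = t := by
  rw [mirror_mirror ht]; simp [mirror, ← two_mul]

lemma map_mirror_map_mirror {P : List ℕ} (hP : Bounded K P) :
    (P.map (mirror K a)).map (mirror K a) = P := by
  rw [List.map_map]
  exact (List.map_congr_left fun t ht => mirror_mirror_self (hP t ht)).trans (List.map_id P)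

lemma Bounded.map_mirror {P : List ℕ} (hP : Bounded K P) : Bounded K (P.map (mirror K a)) := by
  simpa [Bounded] using fun t ht => mirror_lt (hP t ht)

lemma far_mirror {x y : ℕ} (hy : y < K) (hxy : x + 2 ≤ y) : Far (mirror K a x) (mirror K a y) := by
  by_cases ha : Even a <;> simp [mirror, ha, Far] <;> omega

lemma adj_mirror {x : ℕ} (hx : x + 1 < K) : Adj (mirror K a x) (mirror K a (x + 1)) := by
  by_cases ha : Even a <;> simp [mirror, ha, Adj]; omega

lemma Cong.map_mirror {u v : List ℕ} (h : u ≋ v) (hu : Bounded K u) :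
    u.map (mirror K a) ≋ v.map (mirror K a) :=
  h.map (A := Set.Iio K) (fun _ _ _ hy hxy => far_mirror hy hxy) (fun _ _ hx => adj_mirror hx) hu

end Mirror

def deltaPow (K a : ℕ) : List ℕ := (List.replicate a (delta K)).flatten

@[simp] lemma deltaPow_zero (K : ℕ) : deltaPow K 0 = [] := rfl

lemma deltaPow_add (K a b : ℕ) : deltaPow K (a + b) = deltaPow K a ++ deltaPow K b := by
  simp only [deltaPow, List.replicate_add, List.flatten_append]

lemma deltaPow_one (K : ℕ) : deltaPow K 1 = delta K := by simp [deltaPow]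

lemma deltaPow_add_comm (K a b : ℕ) :
    deltaPow K a ++ deltaPow K b = deltaPow K b ++ deltaPow K a := by
  rw [← deltaPow_add, ← deltaPow_add, Nat.add_comm]

lemma bounded_deltaPow (K a : ℕ) : Bounded K (deltaPow K a) := by
  simpa [Bounded, deltaPow] using fun x _ hx => bounded_delta K x hx

lemma append_delta {K : ℕ} {P : List ℕ} (hP : Bounded K P) :
    P ++ delta K ≋ delta K ++ P.map (mirror K 1) := by
  induction P with
  | nil => simpa using .refl _
  | cons x P ih =>
    calc x :: (P ++ delta K) ≋ x :: (delta K ++ P.map (mirror K 1)) :=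
        (ih fun z hz => hP z (by simp [hz])).cons x
      _ ≋ (delta K ++ [K - 1 - x]) ++ P.map (mirror K 1) :=
        Cong.append_right _ (cons_delta (hP x (by simp)))
      _ ≋ delta K ++ (x :: P).map (mirror K 1) := .of_eq (by simp [mirror_one])

lemma append_deltaPow {K : ℕ} (a : ℕ) {P : List ℕ} (hP : Bounded K P) :
    P ++ deltaPow K a ≋ deltaPow K a ++ P.map (mirror K a) := by
  induction a generalizing P with
  | zero => simpa [deltaPow] using .refl _
  | succ a ih =>
    have hmap : (P.map (mirror K 1)).map (mirror K a) = P.map (mirror K (a + 1)) := by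
      simpa using List.map_congr_left fun t ht => mirror_mirror (hP t ht)
    calc P ++ deltaPow K (a + 1) = (P ++ delta K) ++ deltaPow K a := by
          simp [deltaPow_add, deltaPow_one, Nat.add_comm a]
      _ ≋ (delta K ++ P.map (mirror K 1)) ++ deltaPow K a := Cong.append_right _ (append_delta hP)
      _ ≋ delta K ++ (deltaPow K a ++ (P.map (mirror K 1)).map (mirror K a)) := by
          simpa using Cong.append_left (delta K) (ih hP.map_mirror)
      _ = deltaPow K (a + 1) ++ P.map (mirror K (a + 1)) := by
          simp [hmap, deltaPow_add, deltaPow_one, Nat.add_comm a]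

lemma deltaPow_append_cons {K a s : ℕ} (hs : s < K) (p : List ℕ) :
    deltaPow K a ++ s :: p ≋ mirror K a s :: (deltaPow K a ++ p) := by
  have h := append_deltaPow a (P := [mirror K a s]) (by simpa [Bounded] using mirror_lt hs)
  simpa [mirror_mirror_self hs] using (Cong.append_right p h).symm

lemma delta_cong_map_mirror (K a : ℕ) : delta K ≋ (delta K).map (mirror K a) := by
  refine Cong.cancel_left (p := deltaPow K a) ?_
  simpa [← deltaPow_one, ← deltaPow_add, Nat.add_comm a] using
    append_deltaPow a (bounded_delta K)

lemma exists_append_cong_deltaPow {K : ℕ} {P : List ℕ} (hP : Bounded K P) :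
    ∃ Q, Bounded K Q ∧ P ++ Q ≋ deltaPow K P.length := by
  induction P with
  | nil => exact ⟨[], by simp [Bounded], .refl _⟩
  | cons t P ih =>
    have ht : t < K := hP t (by simp)
    obtain ⟨Q, hQ, hPQ⟩ := ih fun x hx => hP x (by simp [hx])
    obtain ⟨C, hC⟩ := exists_delta_cong_cons (mirror_lt (a := P.length) ht)
    have hCb : Bounded K C := fun x hx => hC.bounded_iff.mp (bounded_delta K) x (by simp [hx])
    refine ⟨Q ++ C, hQ.append hCb, ?_⟩
    calc t :: P ++ (Q ++ C) = t :: ((P ++ Q) ++ C) := by simp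
      _ ≋ t :: (deltaPow K P.length ++ C) := (hPQ.append_right C).cons t
      _ ≋ deltaPow K P.length ++ mirror K P.length t :: C := by
          simpa [mirror_mirror_self ht] using
            (deltaPow_append_cons (a := P.length) (s := mirror K P.length t) (mirror_lt ht) C).symm
      _ ≋ deltaPow K P.length ++ delta K := Cong.append_left _ hC.symm
      _ = deltaPow K (t :: P).length := by simp [deltaPow_add, deltaPow_one]

lemma Cong.of_map_add {s : ℕ} {u v : List ℕ} (h : u.map (· + s) ≋ v.map (· + s)) : u ≋ v := by
  have := h.map (A := Set.Ici s) (f := (· - s)) (fun x hx y _ hxy => by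
    simp only [Set.mem_Ici] at hx; unfold Far; omega)
    (fun x hx _ => by simp only [Set.mem_Ici] at hx; unfold Adj; omega) (by simp)
  simpa [List.map_map, Function.comp_def] using this

section Cofactor

variable {K t : ℕ}

noncomputable def deltaCofactor (K t : ℕ) : List ℕ :=
  if h : t < K then (exists_delta_cong_append h).choose else []

lemma delta_cong_deltaCofactor_append (ht : t < K) : delta K ≋ deltaCofactor K t ++ [t] := by
  rw [deltaCofactor, dif_pos ht]
  exact (exists_delta_cong_append ht).choose_spec

lemma bounded_deltaCofactor (ht : t < K) : Bounded K (deltaCofactor K t) := fun x hx =>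
  (delta_cong_deltaCofactor_append ht).bounded_iff.mp (bounded_delta K) x (by simp [hx])

lemma mirror_one_cons_deltaCofactor (ht : t < K) : mirror K 1 t :: deltaCofactor K t ≋ delta K := by
  refine Cong.cancel_right (p := [t]) ?_
  calc mirror K 1 t :: (deltaCofactor K t ++ [t]) ≋ mirror K 1 t :: delta K :=
        (delta_cong_deltaCofactor_append ht).symm.cons _
    _ ≋ delta K ++ [t] := by
        simpa [mirror_one, Nat.sub_sub_self (Nat.le_sub_one_of_lt ht)] using
          cons_delta (K := K) (s := mirror K 1 t) (mirror_lt ht)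

lemma map_mirror_deltaCofactor_append (a : ℕ) (ht : t < K) :
    delta K ≋ (deltaCofactor K t).map (mirror K a) ++ [mirror K a t] := by
  simpa using (delta_cong_map_mirror K a).trans
    ((delta_cong_deltaCofactor_append ht).map_mirror (bounded_delta K))

lemma deltaPow_append_deltaCofactor (a : ℕ) (ht : t < K) :
    deltaPow K a ++ deltaCofactor K t ≋ (deltaCofactor K t).map (mirror K a) ++ deltaPow K a := by
  have h := append_deltaPow a ((bounded_deltaCofactor ht).map_mirror (a := a))
  rw [map_mirror_map_mirror (bounded_deltaCofactor ht)] at h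
  exact h.symm

end Cofactor

/-- Formal fractions `Δ⁻ᵏ p` of positive words, encoded as pairs `(k, p)`. -/
def fractionSetoid (K : ℕ) : Setoid (ℕ × List ℕ) where
  r p q := ∃ a b, a + p.1 = b + q.1 ∧ deltaPow K a ++ p.2 ≋ deltaPow K b ++ q.2
  iseqv.refl _ := ⟨0, 0, rfl, .refl _⟩
  iseqv.symm := fun ⟨a, b, hab, h⟩ => ⟨b, a, hab.symm, h.symm⟩
  iseqv.trans := by
    rintro p q r ⟨a, b, hab, h₁⟩ ⟨c, d, hcd, h₂⟩
    refine ⟨c + a, b + d, by omega, ?_⟩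
    calc deltaPow K (c + a) ++ p.2 = deltaPow K c ++ (deltaPow K a ++ p.2) := by
          simp [deltaPow_add]
      _ ≋ deltaPow K c ++ (deltaPow K b ++ q.2) := Cong.append_left _ h₁
      _ = deltaPow K b ++ (deltaPow K c ++ q.2) := by
          rw [← List.append_assoc, deltaPow_add_comm, List.append_assoc]
      _ ≋ deltaPow K b ++ (deltaPow K d ++ r.2) := Cong.append_left _ h₂
      _ = deltaPow K (b + d) ++ r.2 := by simp [deltaPow_add]

abbrev Fraction (K : ℕ) : Type := Quotient (fractionSetoid K)

/-- Left multiplication by `σ t`, using `σ t Δ⁻ᵏ = Δ⁻ᵏ σ (mirror K k t)`. -/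
def mulσ (K t : ℕ) (p : ℕ × List ℕ) : ℕ × List ℕ := (p.1, mirror K p.1 t :: p.2)

/-- Left multiplication by `σ t⁻¹`, using `σ t⁻¹ Δ⁻ᵏ = Δ⁻ᵏ⁻¹ (Δ σ (mirror K k t)⁻¹)`. -/
noncomputable def mulσInv (K t : ℕ) (p : ℕ × List ℕ) : ℕ × List ℕ :=
  (p.1 + 1, deltaCofactor K (mirror K p.1 t) ++ p.2)

section Action

variable {K t : ℕ}

lemma mulσ_rel (ht : t < K) {p q : ℕ × List ℕ} :
    fractionSetoid K p q → fractionSetoid K (mulσ K t p) (mulσ K t q) := by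
  rintro ⟨a, b, hab, h⟩
  refine ⟨a, b, hab, ?_⟩
  calc deltaPow K a ++ mirror K p.1 t :: p.2 ≋ mirror K (a + p.1) t :: (deltaPow K a ++ p.2) := by
        simpa [mirror_mirror ht] using deltaPow_append_cons (mirror_lt ht) p.2
    _ ≋ mirror K (b + q.1) t :: (deltaPow K b ++ q.2) := hab ▸ h.cons _
    _ ≋ deltaPow K b ++ mirror K q.1 t :: q.2 := by
        simpa [mirror_mirror ht] using (deltaPow_append_cons (mirror_lt ht) q.2).symm

lemma mulσInv_rel (ht : t < K) {p q : ℕ × List ℕ} :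
    fractionSetoid K p q → fractionSetoid K (mulσInv K t p) (mulσInv K t q) := by
  rintro ⟨a, b, hab, h⟩
  refine ⟨a, b, by simp only [mulσInv]; omega, ?_⟩
  have hp := mirror_lt (a := p.1) ht
  have hq := mirror_lt (a := q.1) ht
  -- Both sides are complements in `Δ` of the same letter `mirror K (a + p.1) t`.
  have hD : (deltaCofactor K (mirror K p.1 t)).map (mirror K a) ≋
      (deltaCofactor K (mirror K q.1 t)).map (mirror K b) := by
    refine Cong.cancel_right (p := [mirror K (a + p.1) t]) ?_
    have h₁ := map_mirror_deltaCofactor_append a hp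
    have h₂ := map_mirror_deltaCofactor_append b hq
    rw [mirror_mirror ht] at h₁
    rw [mirror_mirror ht, ← hab] at h₂
    exact h₁.symm.trans h₂
  calc deltaPow K a ++ (deltaCofactor K (mirror K p.1 t) ++ p.2)
      ≋ (deltaCofactor K (mirror K p.1 t)).map (mirror K a) ++ (deltaPow K a ++ p.2) := by
        simpa using Cong.append_right p.2 (deltaPow_append_deltaCofactor a hp)
    _ ≋ (deltaCofactor K (mirror K q.1 t)).map (mirror K b) ++ (deltaPow K b ++ q.2) :=
        hD.append h
    _ ≋ deltaPow K b ++ (deltaCofactor K (mirror K q.1 t) ++ q.2) := by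
        simpa using Cong.append_right q.2 (deltaPow_append_deltaCofactor b hq).symm

noncomputable def mulσPerm (K t : ℕ) (ht : t < K) : Equiv.Perm (Fraction K) where
  toFun := Quotient.map (mulσ K t) fun _ _ => mulσ_rel ht
  invFun := Quotient.map (mulσInv K t) fun _ _ => mulσInv_rel ht
  left_inv := by
    rintro ⟨k, p⟩
    refine Quotient.sound ⟨0, 1, by simp [mulσ, mulσInv]; omega, ?_⟩
    simpa [mulσ, mulσInv, deltaPow_one] using
      Cong.append_right p (delta_cong_deltaCofactor_append (mirror_lt (a := k) ht)).symm
  right_inv := by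
    rintro ⟨k, p⟩
    refine Quotient.sound ⟨0, 1, by simp [mulσ, mulσInv]; omega, ?_⟩
    have h := mirror_one_cons_deltaCofactor (mirror_lt (a := k) ht)
    rw [mirror_mirror ht, Nat.add_comm] at h
    simpa [mulσ, mulσInv, deltaPow_one] using Cong.append_right p h

lemma mulσPerm_mk (ht : t < K) (k : ℕ) (p : List ℕ) :
    mulσPerm K t ht ⟦(k, p)⟧ = ⟦(k, mirror K k t :: p)⟧ := rfl

end Action

end BraidWord

namespace BraidGroup

variable {n : ℕ}

lemma σ_mul_σ_comm {a b : Fin (n - 1)} (h : (a : ℕ) + 1 < b) : σ a * σ b = σ b * σ a := by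
  have := PresentedGroup.one_of_mem (rels := braidRels n) (Or.inl ⟨a, b, h, rfl⟩)
  change σ a * σ b * (σ a)⁻¹ * (σ b)⁻¹ = 1 at this
  rw [mul_assoc _ (σ a)⁻¹, ← mul_inv_rev] at this
  exact mul_inv_eq_one.mp this

lemma σ_braid {a b : Fin (n - 1)} (h : (a : ℕ) + 1 = b) : σ a * σ b * σ a = σ b * σ a * σ b := by
  have := PresentedGroup.one_of_mem (rels := braidRels n) (Or.inr ⟨a, b, h, rfl⟩)
  simp only [map_mul, map_inv] at this
  exact mul_inv_eq_one.mp this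

variable {G : Type*} [Group G] (f : Fin (n - 1) → G)
  (hcomm : ∀ a b : Fin (n - 1), (a : ℕ) + 1 < b → f a * f b = f b * f a)
  (hbraid : ∀ a b : Fin (n - 1), (a : ℕ) + 1 = b → f a * f b * f a = f b * f a * f b)

def lift : BraidGroup n →* G :=
  PresentedGroup.toGroup (rels := braidRels n) (f := f) <| by
    rintro r (⟨a, b, h, rfl⟩ | ⟨a, b, h, rfl⟩)
    · simp [hcomm a b h]
    · simp [hbraid a b h]

@[simp] lemma lift_σ (i : Fin (n - 1)) : lift f hcomm hbraid (σ i) = f i :=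
  PresentedGroup.toGroup.of _

/-- Junk value `1` for `t ≥ n - 1`. -/
def σNat (n t : ℕ) : BraidGroup n := if h : t < n - 1 then σ ⟨t, h⟩ else 1

def ofWord (n : ℕ) (w : List ℕ) : BraidGroup n := (w.map (σNat n)).prod

@[simp] lemma ofWord_nil : ofWord n [] = 1 := rfl

lemma ofWord_cons (t : ℕ) (w : List ℕ) : ofWord n (t :: w) = σNat n t * ofWord n w := by
  simp [ofWord]

lemma ofWord_append (u v : List ℕ) : ofWord n (u ++ v) = ofWord n u * ofWord n v := by
  simp [ofWord]

@[simp] lemma ofWord_singleton (t : Fin (n - 1)) : ofWord n [t] = σ t := by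
  simp [ofWord, σNat]

end BraidGroup

open BraidGroup in
lemma BraidWord.Cong.ofWord_eq {n : ℕ} {u v : List ℕ} (h : u ≋ v) (hu : Bounded (n - 1) u) :
    ofWord n u = ofWord n v := by
  refine h.prod_map_eq (A := Set.Iio (n - 1)) ?_ ?_ hu
  · intro x hx y hy hxy
    simp only [Set.mem_Iio] at hx hy
    simpa [σNat, hx, hy] using σ_mul_σ_comm (a := ⟨x, hx⟩) (b := ⟨y, hy⟩) (by simp; omega)
  · intro x hx hy
    simp only [Set.mem_Iio] at hx hy
    simpa [σNat, hx, hy] using σ_braid (a := ⟨x, hx⟩) (b := ⟨x + 1, hy⟩) rfl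

namespace BraidWord

noncomputable def fractionAction (n : ℕ) : BraidGroup n →* Equiv.Perm (Fraction (n - 1)) :=
  BraidGroup.lift (fun i => mulσPerm (n - 1) i i.isLt)
    (fun a b hab => by
      refine Equiv.ext fun x => Quotient.inductionOn x fun ⟨k, p⟩ => ?_
      simp only [Equiv.Perm.mul_apply, mulσPerm_mk]
      exact Quotient.sound ⟨0, 0, rfl, Cong.swap (far_mirror b.isLt (by omega)) [] p⟩)
    (fun a b hab => by
      refine Equiv.ext fun x => Quotient.inductionOn x fun ⟨k, p⟩ => ?_
      simp only [Equiv.Perm.mul_apply, mulσPerm_mk]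
      rw [← hab]
      exact Quotient.sound ⟨0, 0, rfl, Cong.braid (adj_mirror (hab ▸ b.isLt)) [] p⟩)

lemma fractionAction_ofWord {n : ℕ} {w : List ℕ} (hw : Bounded (n - 1) w) (u : List ℕ) :
    fractionAction n (BraidGroup.ofWord n w) ⟦(0, u)⟧ = ⟦(0, w ++ u)⟧ := by
  induction w with
  | nil => rfl
  | cons t w ih =>
    have ht : t < n - 1 := hw t (by simp)
    rw [BraidGroup.ofWord_cons, map_mul, Equiv.Perm.mul_apply, ih fun x hx => hw x (by simp [hx])]
    simp [BraidGroup.σNat, ht, fractionAction, mulσPerm_mk]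

theorem cong_of_ofWord_eq {n : ℕ} {u v : List ℕ} (hu : Bounded (n - 1) u)
    (hv : Bounded (n - 1) v) (h : BraidGroup.ofWord n u = BraidGroup.ofWord n v) : u ≋ v := by
  have := congrArg (fun g => fractionAction n g ⟦(0, [])⟧) h
  simp only [fractionAction_ofWord hu, fractionAction_ofWord hv, List.append_nil] at this
  obtain ⟨a, b, hab, h⟩ := Quotient.exact this
  obtain rfl : a = b := by simpa using hab
  exact Cong.cancel_left h

end BraidWord

namespace BraidGroup

open BraidWord

variable {m : ℕ}

lemma ofWord_deltaPow_add (a b : ℕ) :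
    ofWord m (deltaPow (m - 1) (a + b)) =
      ofWord m (deltaPow (m - 1) a) * ofWord m (deltaPow (m - 1) b) := by
  rw [deltaPow_add, ofWord_append]

lemma commute_ofWord_deltaPow (a b : ℕ) :
    Commute (ofWord m (deltaPow (m - 1) a)) (ofWord m (deltaPow (m - 1) b)) := by
  rw [Commute, SemiconjBy, ← ofWord_deltaPow_add, ← ofWord_deltaPow_add, Nat.add_comm]

lemma ofWord_mul_inv_deltaPow {P : List ℕ} (hP : Bounded (m - 1) P) (l : ℕ) :
    ofWord m P * (ofWord m (deltaPow (m - 1) l))⁻¹ =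
      (ofWord m (deltaPow (m - 1) l))⁻¹ * ofWord m (P.map (mirror (m - 1) l)) := by
  have hP' := hP.map_mirror (a := l)
  have h := (append_deltaPow l hP').ofWord_eq (hP'.append (bounded_deltaPow _ l))
  rw [map_mirror_map_mirror hP, ofWord_append, ofWord_append] at h
  rw [eq_inv_mul_iff_mul_eq, ← mul_assoc, ← h, mul_inv_cancel_right]

lemma closure_range_σ : Subgroup.closure (Set.range (σ : Fin (m - 1) → BraidGroup m)) = ⊤ :=
  PresentedGroup.closure_range_of _

def IsFraction (x : BraidGroup m) : Prop :=
  ∃ k P, Bounded (m - 1) P ∧ x = (ofWord m (deltaPow (m - 1) k))⁻¹ * ofWord m P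

lemma IsFraction.mul {x y : BraidGroup m} (hx : IsFraction x) (hy : IsFraction y) :
    IsFraction (x * y) := by
  obtain ⟨k, P, hP, rfl⟩ := hx
  obtain ⟨l, Q, hQ, rfl⟩ := hy
  refine ⟨l + k, P.map (mirror (m - 1) l) ++ Q, hP.map_mirror.append hQ, ?_⟩
  rw [ofWord_append, ofWord_deltaPow_add, mul_inv_rev, mul_assoc, ← mul_assoc (ofWord m P),
    ofWord_mul_inv_deltaPow hP]
  group

lemma IsFraction.inv {x : BraidGroup m} (hx : IsFraction x) : IsFraction x⁻¹ := by
  obtain ⟨k, P, hP, rfl⟩ := hx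
  obtain ⟨Q, hQ, hPQ⟩ := exists_append_cong_deltaPow hP
  have hPinv : (ofWord m P)⁻¹ = ofWord m Q * (ofWord m (deltaPow (m - 1) P.length))⁻¹ := by
    rw [← hPQ.ofWord_eq (hP.append hQ), ofWord_append]
    group
  refine ⟨P.length, (Q ++ deltaPow (m - 1) k).map (mirror (m - 1) P.length),
    (hQ.append (bounded_deltaPow _ k)).map_mirror, ?_⟩
  rw [← ofWord_mul_inv_deltaPow (hQ.append (bounded_deltaPow _ k)), ofWord_append, mul_inv_rev,
    inv_inv, hPinv, mul_assoc, mul_assoc, (commute_ofWord_deltaPow k P.length).inv_right.eq]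

lemma isFraction (x : BraidGroup m) : IsFraction x := by
  have hx : x ∈ Subgroup.closure (Set.range σ) := closure_range_σ ▸ Subgroup.mem_top x
  induction hx using Subgroup.closure_induction with
  | mem _ h =>
    obtain ⟨i, rfl⟩ := h
    exact ⟨0, [i], by simp [Bounded], by simp⟩
  | one => exact ⟨0, [], by simp [Bounded], by simp⟩
  | mul _ _ _ _ hx hy => exact hx.mul hy
  | inv _ _ hx => exact hx.inv

variable {n s : ℕ}

lemma shift_lt (h : m + s ≤ n) (t : Fin (m - 1)) : (t : ℕ) + s < n - 1 := by omega

def shiftHom (m n s : ℕ) (h : m + s ≤ n) : BraidGroup m →* BraidGroup n :=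
  lift (fun t => σ ⟨t + s, shift_lt h t⟩)
    (fun _ _ hab => σ_mul_σ_comm (by simp; omega)) (fun _ _ hab => σ_braid (by simp; omega))

lemma shiftHom_ofWord (h : m + s ≤ n) {w : List ℕ} (hw : Bounded (m - 1) w) :
    shiftHom m n s h (ofWord m w) = ofWord n (w.map (· + s)) := by
  induction w with
  | nil => simp
  | cons t w ih =>
    have ht : t < m - 1 := hw t (by simp)
    rw [ofWord_cons, map_mul, ih fun x hx => hw x (by simp [hx]), List.map_cons, ofWord_cons]
    simp [σNat, ht, shift_lt h ⟨t, ht⟩, shiftHom]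

lemma shiftHom_injective (h : m + s ≤ n) : Function.Injective (shiftHom m n s h) := by
  refine (injective_iff_map_eq_one _).mpr fun x hx => ?_
  obtain ⟨k, P, hP, rfl⟩ := isFraction x
  have hb : ∀ {w}, Bounded (m - 1) w → Bounded (n - 1) (w.map (· + s)) := fun hw => by
    simpa [Bounded] using fun x hx => by have := hw x hx; omega
  rw [map_mul, map_inv, inv_mul_eq_one, shiftHom_ofWord h (bounded_deltaPow _ k),
    shiftHom_ofWord h hP] at hx
  have hcong := (cong_of_ofWord_eq (hb (bounded_deltaPow _ k)) (hb hP) hx).of_map_add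
  rw [hcong.ofWord_eq (bounded_deltaPow _ k), inv_mul_cancel]

lemma range_shiftHom (h : m + s ≤ n) :
    (shiftHom m n s h).range =
      Subgroup.closure {x | ∃ t : Fin (n - 1), s ≤ t ∧ (t : ℕ) < s + (m - 1) ∧ x = σ t} := by
  rw [MonoidHom.range_eq_map, ← closure_range_σ, MonoidHom.map_closure]
  congr 1
  ext x
  constructor
  · rintro ⟨_, ⟨t, rfl⟩, rfl⟩
    exact ⟨⟨t + s, shift_lt h t⟩, by simp, by simp; omega, by simp [shiftHom]⟩
  · rintro ⟨t, hst, hts, rfl⟩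
    refine ⟨_, ⟨⟨t - s, by omega⟩, rfl⟩, ?_⟩
    simp only [shiftHom]
    exact (lift_σ _ _ _ _).trans (congrArg σ (Fin.ext (by simp; omega)))

end BraidGroup

/-- For `1 ≤ i ≤ j < n`, the subgroup of `B_n` generated by `σᵢ, σ_{i+1}, …, σⱼ`
(1-indexed) is isomorphic to the braid group `B_{j-i+2}`. -/
theorem parabolic_subgroup_iso_braidGroup (n i j : ℕ) (hi : 1 ≤ i) (hij : i ≤ j) (hj : j < n) :
    Nonempty ((Subgroup.closure
        {x : BraidGroup n | ∃ k : Fin (n - 1), i ≤ (k : ℕ) + 1 ∧ (k : ℕ) + 1 ≤ j ∧ x = σ k})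
      ≃* BraidGroup (j - i + 2)) := by
  have h : j - i + 2 + (i - 1) ≤ n := by omega
  have hrange : (BraidGroup.shiftHom _ _ _ h).range = Subgroup.closure
      {x : BraidGroup n | ∃ k : Fin (n - 1), i ≤ (k : ℕ) + 1 ∧ (k : ℕ) + 1 ≤ j ∧ x = σ k} := by
    rw [BraidGroup.range_shiftHom]
    congr 1
    ext x
    simp only [Set.mem_ofPred_eq, ← and_assoc]
    exact exists_congr fun k => and_congr_left' (by omega)
  exact ⟨((MonoidHom.ofInjective (BraidGroup.shiftHom_injective h)).trans
    (MulEquiv.subgroupCongr hrange)).symm⟩
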